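/- Assume the outlier model, and assume that for every observation matrix Y = (y_1,…,y_n) with y_i ∈ ℝ^p the normalizing constant p(Y) = ∫ |Ω|^{1/(2(1+γ))} (Σ_{i=1}^n exp(−(γ/2) y_iᵀΩy_i))^{1/γ} π(Ω) dΩ is finite. Define p(D*) = ∫ |Ω|^{1/(2(1+γ))} (Σ_{i∈K} exp(−(γ/2) a_iᵀΩa_i))^{1/γ} π(Ω) dΩ. Then lim_{z→∞} p(D(z)) = p(D*). -/

import Mathlib

open MeasureTheory Matrix Filter Topology

instance matrixMeasurableSpace {m n α : Type*} [MeasurableSpace α] :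
    MeasurableSpace (Matrix m n α) :=
  inferInstanceAs (MeasurableSpace (m → n → α))

/-- Build a symmetric `p × p` matrix from its upper-triangular entries. -/
noncomputable def symOfUpper (p : ℕ) (x : {ij : Fin p × Fin p // ij.1 ≤ ij.2} → ℝ) :
    Matrix (Fin p) (Fin p) ℝ :=
  Matrix.of fun i j => if h : i ≤ j then x ⟨(i, j), h⟩ else x ⟨(j, i), (le_total i j).resolve_left h⟩

/-- The unnormalized MAP γ-posterior
`q_γ(Ω; (y_i)_{i ∈ S}) = |Ω|^{1/(2(1+γ))} (∑_{i∈S} exp(−(γ/2) y_iᵀΩy_i))^{1/γ} π(Ω)`. -/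
noncomputable def qGamma {p n : ℕ} (γ : ℝ) (pr : Matrix (Fin p) (Fin p) ℝ → ℝ)
    (S : Finset (Fin n)) (Y : Fin n → (Fin p → ℝ)) (Ω : Matrix (Fin p) (Fin p) ℝ) : ℝ :=
  Ω.det ^ (1 / (2 * (1 + γ))) *
    (∑ i ∈ S, Real.exp (-(γ / 2) * (Y i ⬝ᵥ (Ω *ᵥ Y i)))) ^ (1 / γ) * pr Ω

/-- Observations in the outlier model: `y_i(z) = a_i` for `i ∈ K`, and `a_i + z • b_i` else. -/
noncomputable def yData {p n : ℕ} (z : ℝ) (K : Finset (Fin n)) (a b : Fin n → (Fin p → ℝ)) :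
    Fin n → (Fin p → ℝ) :=
  fun i => if i ∈ K then a i else a i + z • b i

lemma continuous_symOfUpper (p : ℕ) : Continuous (symOfUpper p) := by
  apply continuous_pi; intro i
  apply continuous_pi; intro j
  unfold symOfUpper
  simp only [Matrix.of_apply]
  by_cases h : i ≤ j
  · simp only [dif_pos h]; exact continuous_apply _
  · simp only [dif_neg h]; exact continuous_apply _

lemma measurable_symOfUpper (p : ℕ) : Measurable (symOfUpper p) := by
  apply measurable_pi_lambda; intro i
  apply measurable_pi_lambda; intro j
  unfold symOfUpper
  simp only [Matrix.of_apply]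
  by_cases h : i ≤ j
  · simp only [dif_pos h]; exact measurable_pi_apply _
  · simp only [dif_neg h]; exact measurable_pi_apply _

lemma measurable_rpow_const (c : ℝ) : Measurable fun t : ℝ => t ^ c := by
  apply measurable_of_continuousOn_compl_singleton (0 : ℝ)
  intro t ht
  exact (Real.continuousAt_rpow_const t c (Or.inl ht)).continuousWithinAt

lemma measurable_qG {p n : ℕ} (γ : ℝ) (pr : Matrix (Fin p) (Fin p) ℝ → ℝ)
    (hpr : Measurable pr) (S : Finset (Fin n)) (Y : Fin n → (Fin p → ℝ)) :
    Measurable (fun x : {ij : Fin p × Fin p // ij.1 ≤ ij.2} → ℝ =>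
      qGamma γ pr S Y (symOfUpper p x)) := by
  unfold qGamma
  apply Measurable.mul
  apply Measurable.mul
  · exact (measurable_rpow_const _).comp ((continuous_symOfUpper p).matrix_det.measurable)
  · refine (measurable_rpow_const _).comp ?_
    apply Finset.measurable_sum
    intro i _
    apply Measurable.exp
    apply Measurable.const_mul
    exact (continuous_const.dotProduct
      ((continuous_symOfUpper p).matrix_mulVec continuous_const)).measurable
  · exact hpr.comp (measurable_symOfUpper p)

-- quadratic form helpers
lemma quad_nonneg {p : ℕ} {Ω : Matrix (Fin p) (Fin p) ℝ} (h : Ω.PosDef) (v : Fin p → ℝ) :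
    0 ≤ v ⬝ᵥ (Ω *ᵥ v) := by
  simpa using h.posSemidef.dotProduct_mulVec_nonneg v

lemma quad_pos {p : ℕ} {Ω : Matrix (Fin p) (Fin p) ℝ} (h : Ω.PosDef) {v : Fin p → ℝ}
    (hv : v ≠ 0) : 0 < v ⬝ᵥ (Ω *ᵥ v) := by
  simpa using h.dotProduct_mulVec_pos hv

lemma qG_nonneg {p n : ℕ} {γ : ℝ} {pr : Matrix (Fin p) (Fin p) ℝ → ℝ}
    (hpr_nonneg : ∀ Ω, 0 ≤ pr Ω)
    (hpr_supp : ∀ Ω : Matrix (Fin p) (Fin p) ℝ, ¬ Ω.PosDef → pr Ω = 0)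
    (S : Finset (Fin n)) (Y : Fin n → (Fin p → ℝ)) (Ω : Matrix (Fin p) (Fin p) ℝ) :
    0 ≤ qGamma γ pr S Y Ω := by
  by_cases h : Ω.PosDef
  · unfold qGamma
    have hdet : (0:ℝ) < Ω.det := h.det_pos
    have h1 : 0 ≤ Ω.det ^ (1 / (2 * (1 + γ))) := (Real.rpow_pos_of_pos hdet _).le
    have h2 : 0 ≤ (∑ i ∈ S, Real.exp (-(γ / 2) * (Y i ⬝ᵥ (Ω *ᵥ Y i)))) ^ (1 / γ) :=
      Real.rpow_nonneg (Finset.sum_nonneg fun i _ => (Real.exp_pos _).le) _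
    exact mul_nonneg (mul_nonneg h1 h2) (hpr_nonneg Ω)
  · simp [qGamma, hpr_supp Ω h]

/-- Convergence of the MAP γ-posterior normalizing constant: `p(D(z)) → p(D*)` as `z → ∞`. -/
theorem stmt9 (p n : ℕ) (γ : ℝ) (hγ : 0 < γ)
    (K L : Finset (Fin n)) (hdisj : Disjoint K L) (hcover : K ∪ L = Finset.univ)
    (a b : Fin n → (Fin p → ℝ)) (hb : ∀ i ∈ L, b i ≠ 0)
    (pr : Matrix (Fin p) (Fin p) ℝ → ℝ) (hpr_meas : Measurable pr)
    (hpr_nonneg : ∀ Ω, 0 ≤ pr Ω)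
    (hpr_supp : ∀ Ω : Matrix (Fin p) (Fin p) ℝ, ¬ Ω.PosDef → pr Ω = 0)
    (hint : ∀ Y : Fin n → (Fin p → ℝ),
      Integrable (fun x : {ij : Fin p × Fin p // ij.1 ≤ ij.2} → ℝ =>
        qGamma γ pr Finset.univ Y (symOfUpper p x))) :
    Tendsto (fun z : ℝ => ∫ x, qGamma γ pr Finset.univ (yData z K a b) (symOfUpper p x))
      atTop (𝓝 (∫ x, qGamma γ pr K a (symOfUpper p x))) := by
  classical
  set Y0 : Fin n → (Fin p → ℝ) := fun i => if i ∈ K then a i else 0 with hY0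
  have hLK : ∀ i ∈ L, i ∉ K := fun i hi hK => Finset.disjoint_left.mp hdisj hK hi
  -- rewrite of the sum for data z
  have hsplit : ∀ (z : ℝ) (Ω : Matrix (Fin p) (Fin p) ℝ),
      (∑ i, Real.exp (-(γ / 2) * (yData z K a b i ⬝ᵥ (Ω *ᵥ yData z K a b i))))
        = (∑ i ∈ K, Real.exp (-(γ / 2) * (a i ⬝ᵥ (Ω *ᵥ a i))))
          + ∑ i ∈ L, Real.exp (-(γ / 2) *
              ((a i + z • b i) ⬝ᵥ (Ω *ᵥ (a i + z • b i)))) := by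
    intro z Ω
    rw [← hcover, Finset.sum_union hdisj]
    congr 1
    · exact Finset.sum_congr rfl fun i hi => by simp [yData, hi]
    · exact Finset.sum_congr rfl fun i hi => by simp [yData, hLK i hi]
  apply tendsto_integral_filter_of_dominated_convergence
    (fun x => qGamma γ pr Finset.univ Y0 (symOfUpper p x))
  · exact Eventually.of_forall fun z =>
      (measurable_qG γ pr hpr_meas Finset.univ (yData z K a b)).aestronglyMeasurable
  · refine Eventually.of_forall fun z => ae_of_all _ fun x => ?_
    set Ω := symOfUpper p x with hΩ
    rw [Real.norm_of_nonneg (qG_nonneg hpr_nonneg hpr_supp _ _ _)]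
    by_cases h : Ω.PosDef
    · unfold qGamma
      have hdet : 0 ≤ Ω.det ^ (1 / (2 * (1 + γ))) := (Real.rpow_pos_of_pos h.det_pos _).le
      refine mul_le_mul_of_nonneg_right (mul_le_mul_of_nonneg_left ?_ hdet) (hpr_nonneg Ω)
      apply Real.rpow_le_rpow (Finset.sum_nonneg fun i _ => (Real.exp_pos _).le) ?_
        (by positivity)
      apply Finset.sum_le_sum
      intro i _
      apply Real.exp_le_exp.mpr
      by_cases hi : i ∈ K
      · simp [yData, hY0, hi]
      · have h0 : yData z K a b i = a i + z • b i := by simp [yData, hi]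
        have h1 : Y0 i = 0 := by simp [hY0, hi]
        rw [h0, h1]
        simp only [Matrix.mulVec_zero, dotProduct_zero, mul_zero]
        have := quad_nonneg h (a i + z • b i)
        nlinarith [hγ]
    · simp [qGamma, hpr_supp Ω h]
  · exact hint Y0
  · refine ae_of_all _ fun x => ?_
    set Ω := symOfUpper p x with hΩ
    by_cases h : Ω.PosDef
    · have hsum : Tendsto (fun z : ℝ =>
          ∑ i, Real.exp (-(γ / 2) * (yData z K a b i ⬝ᵥ (Ω *ᵥ yData z K a b i)))) atTop
          (𝓝 (∑ i ∈ K, Real.exp (-(γ / 2) * (a i ⬝ᵥ (Ω *ᵥ a i))))) := by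
        simp only [hsplit]
        nth_rewrite 2 [show (∑ i ∈ K, Real.exp (-(γ / 2) * (a i ⬝ᵥ (Ω *ᵥ a i))))
          = (∑ i ∈ K, Real.exp (-(γ / 2) * (a i ⬝ᵥ (Ω *ᵥ a i)))) + 0 by ring]
        apply tendsto_const_nhds.add
        rw [show (0:ℝ) = ∑ i ∈ L, (0:ℝ) by simp]
        apply tendsto_finset_sum
        intro i hi
        -- exp of the quadratic goes to 0
        have hc : 0 < b i ⬝ᵥ (Ω *ᵥ b i) := quad_pos h (hb i hi)
        set c := b i ⬝ᵥ (Ω *ᵥ b i)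
        set d := (a i ⬝ᵥ (Ω *ᵥ b i)) + (b i ⬝ᵥ (Ω *ᵥ a i))
        set e := a i ⬝ᵥ (Ω *ᵥ a i)
        have hquad : ∀ z : ℝ, (a i + z • b i) ⬝ᵥ (Ω *ᵥ (a i + z • b i))
            = (c * z + d) * z + e := by
          intro z
          simp only [Matrix.mulVec_add, Matrix.mulVec_smul, dotProduct_add, add_dotProduct,
            dotProduct_smul, smul_dotProduct, smul_eq_mul, c, d, e]
          ring
        have hQ : Tendsto (fun z : ℝ => (a i + z • b i) ⬝ᵥ (Ω *ᵥ (a i + z • b i)))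
            atTop atTop := by
          simp only [hquad]
          apply tendsto_atTop_add_const_right
          exact (tendsto_atTop_add_const_right _ d
            (tendsto_id.const_mul_atTop hc)).atTop_mul_atTop₀ tendsto_id
        have hneg : Tendsto (fun z : ℝ =>
            -(γ / 2) * ((a i + z • b i) ⬝ᵥ (Ω *ᵥ (a i + z • b i)))) atTop atBot := by
          simp only [neg_mul]
          exact tendsto_neg_atBot_iff.mpr (hQ.const_mul_atTop (by positivity))
        exact Real.tendsto_exp_atBot.comp hneg
      have hrpow : Tendsto (fun z : ℝ =>
          (∑ i, Real.exp (-(γ / 2) * (yData z K a b i ⬝ᵥ (Ω *ᵥ yData z K a b i)))) ^ (1/γ))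
          atTop (𝓝 ((∑ i ∈ K, Real.exp (-(γ / 2) * (a i ⬝ᵥ (Ω *ᵥ a i)))) ^ (1/γ))) :=
        (Real.continuousAt_rpow_const _ _ (Or.inr (by positivity))).tendsto.comp hsum
      unfold qGamma
      exact (hrpow.const_mul _).mul_const _
    · simp only [qGamma, hpr_supp Ω h, mul_zero]
      exact tendsto_const_nhds
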